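/- arXiv:1209.2327 — 4 statements merged into one kernel-verified Lean document; each statement's English description precedes it below -/
import Mathlib

section
/- Let m ≥ 1 be a natural number and let a be a real number with 0 < a and (m-1)·a² < 1 (for m = 1 no condition on a beyond a < 1 is needed). Then the sum over k from 0 to ⌊m/2⌋ of (C(m,2k+1) - C(m,2k))·a^(2k) is nonnegative. Moreover, if m is odd or m = 2, the conclusion holds under the weaker assumption 0 < a < 1. -/
open Finset

private lemma sum_range_two_mul_aux (f : ℕ → ℝ) (n : ℕ) :
    ∑ j ∈ Finset.range (2 * n), f j = ∑ k ∈ Finset.range n, (f (2 * k) + f (2 * k + 1)) := by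
  induction n with
  | zero => simp
  | succ n ih =>
    rw [show 2 * (n + 1) = 2 * n + 1 + 1 by ring, Finset.sum_range_succ, Finset.sum_range_succ,
      ih, Finset.sum_range_succ, add_assoc]

private lemma key_identity (m : ℕ) (a : ℝ) :
    2 * a * (∑ k ∈ Finset.range (m / 2 + 1),
        ((m.choose (2 * k + 1) : ℝ) - (m.choose (2 * k) : ℝ)) * a ^ (2 * k))
      = (1 + a) ^ m * (1 - a) - (1 - a) ^ m * (1 + a) := by
  set g : ℕ → ℝ := fun j => (m.choose j : ℝ) * (a ^ j * (1 - a) - (-a) ^ j * (1 + a)) with hg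
  have hterm : ∀ k, g (2 * k) + g (2 * k + 1)
      = 2 * a * (((m.choose (2 * k + 1) : ℝ) - (m.choose (2 * k) : ℝ)) * a ^ (2 * k)) := by
    intro k
    have h1 : (-a) ^ (2 * k) = a ^ (2 * k) := Even.neg_pow (even_two_mul k) a
    have h2 : (-a) ^ (2 * k + 1) = -(a ^ (2 * k + 1)) := Odd.neg_pow ⟨k, by ring⟩ a
    simp only [hg, h1, h2]
    ring
  have hsum1 : ∑ j ∈ Finset.range (2 * (m / 2 + 1)), g j
      = 2 * a * (∑ k ∈ Finset.range (m / 2 + 1),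
          ((m.choose (2 * k + 1) : ℝ) - (m.choose (2 * k) : ℝ)) * a ^ (2 * k)) := by
    rw [sum_range_two_mul_aux, Finset.mul_sum]
    exact Finset.sum_congr rfl fun k _ => hterm k
  have hle : m + 1 ≤ 2 * (m / 2 + 1) := by omega
  have hsum2 : ∑ j ∈ Finset.range (2 * (m / 2 + 1)), g j = ∑ j ∈ Finset.range (m + 1), g j := by
    rw [← Finset.sum_range_add_sum_Ico g hle]
    have : ∀ j ∈ Finset.Ico (m + 1) (2 * (m / 2 + 1)), g j = 0 := by
      intro j hj
      simp only [Finset.mem_Ico] at hj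
      simp [hg, Nat.choose_eq_zero_of_lt (show m < j by omega)]
    rw [Finset.sum_eq_zero this, add_zero]
  have hb1 : (1 + a) ^ m = ∑ j ∈ Finset.range (m + 1), (m.choose j : ℝ) * a ^ j := by
    rw [add_comm, add_pow]
    exact Finset.sum_congr rfl fun j _ => by ring
  have hb2 : (1 - a) ^ m = ∑ j ∈ Finset.range (m + 1), (m.choose j : ℝ) * (-a) ^ j := by
    rw [sub_eq_add_neg, add_comm, add_pow]
    exact Finset.sum_congr rfl fun j _ => by ring
  rw [← hsum1, hsum2, hb1, hb2, Finset.sum_mul, Finset.sum_mul, ← Finset.sum_sub_distrib]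
  exact Finset.sum_congr rfl fun j _ => by simp only [hg]; ring

private lemma key_nonneg (m : ℕ) (hm : 1 ≤ m) (a : ℝ) (ha : 0 < a) (ha1 : a < 1) :
    0 ≤ ∑ k ∈ Finset.range (m / 2 + 1),
        ((m.choose (2 * k + 1) : ℝ) - (m.choose (2 * k) : ℝ)) * a ^ (2 * k) := by
  have h2a : (0 : ℝ) < 2 * a := by linarith
  obtain ⟨n, rfl⟩ := Nat.exists_eq_add_of_le hm
  have hpow : (1 - a) ^ n ≤ (1 + a) ^ n :=
    pow_le_pow_left₀ (by linarith) (by linarith) n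
  have hfac : (0:ℝ) ≤ (1 + a) * (1 - a) := by nlinarith
  have hkey : (1 + a) ^ (1 + n) * (1 - a) - (1 - a) ^ (1 + n) * (1 + a)
      = (1 + a) * (1 - a) * ((1 + a) ^ n - (1 - a) ^ n) := by ring
  have h0 : 0 ≤ (1 + a) ^ (1 + n) * (1 - a) - (1 - a) ^ (1 + n) * (1 + a) := by
    rw [hkey]; exact mul_nonneg hfac (by linarith)
  have := key_identity (1 + n) a
  nlinarith [this, h0]

/-- Lemma 4.1: for `m ≥ 1` and `0 < a` with `(m-1)·a² < 1`, the sum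
`∑_{k=0}^{⌊m/2⌋} (C(m,2k+1) - C(m,2k))·a^(2k)` is nonnegative; moreover if `m` is odd
or `m = 2`, the assumption `a < 1` suffices. -/
theorem binomial_sum_nonneg (m : ℕ) (hm : 1 ≤ m) (a : ℝ) (ha : 0 < a) :
    (((m : ℝ) - 1) * a ^ 2 < 1 →
      0 ≤ ∑ k ∈ Finset.range (m / 2 + 1),
        ((m.choose (2 * k + 1) : ℝ) - (m.choose (2 * k) : ℝ)) * a ^ (2 * k)) ∧
    ((Odd m ∨ m = 2) → a < 1 →
      0 ≤ ∑ k ∈ Finset.range (m / 2 + 1),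
        ((m.choose (2 * k + 1) : ℝ) - (m.choose (2 * k) : ℝ)) * a ^ (2 * k)) := by
  constructor
  · intro h
    rcases eq_or_lt_of_le hm with h1 | h1
    · -- m = 1 : the sum is zero
      simp [← h1]
    · -- m ≥ 2, so (m-1)a² < 1 gives a < 1
      have hm2 : (1:ℝ) ≤ (m : ℝ) - 1 := by
        have : (2:ℝ) ≤ (m:ℝ) := by exact_mod_cast h1
        linarith
      have ha2 : a ^ 2 < 1 := by nlinarith [sq_nonneg a]
      have ha1 : a < 1 := by nlinarith
      exact key_nonneg m hm a ha ha1
  · intro _ ha1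
    exact key_nonneg m hm a ha ha1
end

section
/- Let F : ℝ^(m+1) → ℝ be continuous, positive away from 0, and positively 1-homogeneous, and let F_sym be its m-harmonic symmetrization. Then for every m-dimensional subspace V of ℝ^(m+1), the sets {T ∈ V : F(T) ≤ 1} and {T ∈ V : F_sym(T) ≤ 1} have the same m-dimensional Hausdorff measure. Equivalently, the Cartan area integrands A^F and A^(F_sym), defined by A^F(Z) = |Z|·H^m(B₁^m(0)) / H^m({T ∈ Z^⊥ : F(T) ≤ 1}) for Z ≠ 0, coincide. -/
open MeasureTheory Classical

/-- The `m`-harmonic symmetrization of a positively `1`-homogeneous function `F`. -/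
noncomputable def mharmonicSym (m : ℕ) (F : EuclideanSpace ℝ (Fin (m + 1)) → ℝ)
    (y : EuclideanSpace ℝ (Fin (m + 1))) : ℝ :=
  (2 / ((F y ^ m)⁻¹ + (F (-y) ^ m)⁻¹)) ^ ((1 : ℝ) / m)

/-- The Cartan area integrand associated to `F`:
`A^F(Z) = |Z|·H^m(B₁^m(0)) / H^m({T ∈ Z^⊥ : F(T) ≤ 1})` for `Z ≠ 0`, extended by `0`. -/
noncomputable def cartanAF (m : ℕ) (F : EuclideanSpace ℝ (Fin (m + 1)) → ℝ)
    (Z : EuclideanSpace ℝ (Fin (m + 1))) : ℝ :=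
  if Z = 0 then 0 else
    ‖Z‖ * (μH[m] (Metric.closedBall (0 : EuclideanSpace ℝ (Fin m)) 1)).toReal /
      (μH[m] {T | T ∈ (ℝ ∙ Z)ᗮ ∧ F T ≤ 1}).toReal

section Helpers

open Measure Metric Set Module
open scoped Pointwise ENNReal NNReal

set_option linter.unusedSectionVars false

variable {E : Type*} [NormedAddCommGroup E] [NormedSpace ℝ E] [MeasurableSpace E]
  [BorelSpace E] [FiniteDimensional ℝ E] [Nontrivial E]

lemma my_neg_set (s : Set E) : -s = (-1 : ℝ) • s := by
  ext x
  simp only [Set.mem_neg, Set.mem_smul_set]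
  constructor
  · intro h; exact ⟨-x, h, by simp⟩
  · rintro ⟨y, hy, rfl⟩; simpa using hy

lemma my_measure_neg (μ : Measure E) [μ.IsAddHaarMeasure] (s : Set E) : μ (-s) = μ s := by
  rw [my_neg_set, addHaar_smul]
  simp

lemma my_toSphere_neg (μ : Measure E) [μ.IsAddHaarMeasure] :
    MeasurePreserving (fun ω : sphere (0:E) 1 => -ω) μ.toSphere μ.toSphere := by
  have hc : Continuous (fun ω : sphere (0:E) 1 => -ω) := continuous_neg
  refine ⟨hc.measurable, ?_⟩
  ext s hs
  rw [map_apply hc.measurable hs, μ.toSphere_apply' (hc.measurable hs), μ.toSphere_apply' hs]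
  have himg : (Subtype.val '' ((fun ω : sphere (0:E) 1 => -ω) ⁻¹' s)) = -(Subtype.val '' s) := by
    ext x
    simp only [Set.mem_image, Set.mem_preimage, Set.mem_neg]
    constructor
    · rintro ⟨ω, hω, rfl⟩; exact ⟨-ω, hω, by simp⟩
    · rintro ⟨ω, hω, hx⟩
      exact ⟨-ω, by simpa using hω, by rw [coe_neg_sphere, hx, neg_neg]⟩
  rw [himg]
  have hsmul : (Ioo (0:ℝ) 1) • (-(Subtype.val '' s)) = -((Ioo (0:ℝ) 1) • (Subtype.val '' s)) := by
    ext x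
    simp only [Set.mem_smul, Set.mem_neg]
    constructor
    · rintro ⟨t, ht, y, hy, rfl⟩
      exact ⟨t, ht, -y, by simpa using hy, by simp⟩
    · rintro ⟨t, ht, y, hy, hx⟩
      exact ⟨t, ht, -y, by simpa using hy, by rw [smul_neg, hx, neg_neg]⟩
  rw [hsmul, my_measure_neg]

lemma my_polar (μ : Measure E) [μ.IsAddHaarMeasure] (G : E → ℝ)
    (hGc : Continuous fun ω : sphere (0:E) 1 => G ω)
    (hGpos : ∀ x : E, x ≠ 0 → 0 < G x)
    (hGhom : ∀ t : ℝ, 0 < t → ∀ x : E, x ≠ 0 → G (t • x) = t * G x) :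
    μ {x | G x ≤ 1} = ∫⁻ ω : sphere (0:E) 1,
      ENNReal.ofReal ((G ω)⁻¹ ^ (finrank ℝ E) / (finrank ℝ E)) ∂μ.toSphere := by
  set d := finrank ℝ E with hd
  have hd1 : 1 ≤ d := Module.finrank_pos
  set B : Set (sphere (0:E) 1 × Ioi (0:ℝ)) := {p | p.2.1 * G p.1 ≤ 1} with hB
  have hBm : MeasurableSet B := by
    have : Continuous fun p : sphere (0:E) 1 × Ioi (0:ℝ) => p.2.1 * G p.1 :=
      (continuous_subtype_val.comp continuous_snd).mul (hGc.comp continuous_fst)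
    exact (isClosed_le this continuous_const).measurableSet
  have hpre : (homeomorphUnitSphereProd E) ⁻¹' B = {x : ({0}ᶜ : Set E) | G x.1 ≤ 1} := by
    ext x
    have hx0 : (x : E) ≠ 0 := x.2
    have hn : (0:ℝ) < ‖(x:E)‖ := norm_pos_iff.2 hx0
    simp only [Set.mem_preimage, Set.mem_setOf_eq, hB, homeomorphUnitSphereProd_apply_fst_coe,
      homeomorphUnitSphereProd_apply_snd_coe]
    rw [hGhom _ (inv_pos.2 hn) _ hx0, ← mul_assoc, mul_inv_cancel₀ hn.ne', one_mul]
  have hmp := μ.measurePreserving_homeomorphUnitSphereProd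
  have step1 : μ {x | G x ≤ 1} = μ (Subtype.val '' {x : ({0}ᶜ : Set E) | G x.1 ≤ 1}) := by
    have : Subtype.val '' {x : ({0}ᶜ : Set E) | G x.1 ≤ 1} = {x | G x ≤ 1} \ {0} := by
      ext x
      simp only [Set.mem_image, Set.mem_setOf_eq, Set.mem_diff, Set.mem_singleton_iff]
      constructor
      · rintro ⟨y, hy, rfl⟩; exact ⟨hy, y.2⟩
      · rintro ⟨h1, h2⟩; exact ⟨⟨x, h2⟩, h1, rfl⟩
    rw [this, measure_diff_null (measure_singleton 0)]
  rw [step1, ← comap_subtype_coe_apply (measurableSet_singleton (0:E)).compl, ← hpre,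
    hmp.measure_preimage hBm.nullMeasurableSet]
  rw [Measure.prod_apply hBm]
  congr 1
  ext ω
  have hω0 : (ω : E) ≠ 0 := ne_of_mem_sphere ω.2 one_ne_zero
  have hg : 0 < G ω := hGpos _ hω0
  have hsec : Prod.mk ω ⁻¹' B = Iic (⟨(G ω)⁻¹, inv_pos.2 hg⟩ : Ioi (0:ℝ)) := by
    ext r
    simp only [Set.mem_preimage, hB, Set.mem_setOf_eq, Set.mem_Iic]
    rw [← Subtype.coe_le_coe]
    exact ⟨fun h => by rwa [← le_div_iff₀ hg, one_div] at h,
      fun h => by rwa [← le_div_iff₀ hg, one_div]⟩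
  rw [hsec]
  have hsingle : volumeIoiPow (d - 1) {(⟨(G ω)⁻¹, inv_pos.2 hg⟩ : Ioi (0:ℝ))} = 0 := by
    rw [Measure.volumeIoiPow, withDensity_apply _ (measurableSet_singleton _)]
    have : (volume.comap (Subtype.val : Ioi (0:ℝ) → ℝ)) {(⟨(G ω)⁻¹, inv_pos.2 hg⟩ : Ioi (0:ℝ))} = 0 := by
      rw [comap_subtype_coe_apply measurableSet_Ioi]
      simp
    exact setLIntegral_measure_zero _ _ this
  have hdiff := measure_diff_null (μ := volumeIoiPow (d-1))
    (s := Iic (⟨(G ω)⁻¹, inv_pos.2 hg⟩ : Ioi (0:ℝ))) hsingle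
  have hIic : (Iic (⟨(G ω)⁻¹, inv_pos.2 hg⟩ : Ioi (0:ℝ))) \ {(⟨(G ω)⁻¹, inv_pos.2 hg⟩ : Ioi (0:ℝ))} =
      Iio (⟨(G ω)⁻¹, inv_pos.2 hg⟩ : Ioi (0:ℝ)) := by
    ext r
    simp only [Set.mem_diff, Set.mem_Iic, Set.mem_singleton_iff, Set.mem_Iio]
    exact ⟨fun h => lt_of_le_of_ne h.1 h.2, fun h => ⟨h.le, h.ne⟩⟩
  rw [← hdiff, hIic, Measure.volumeIoiPow_apply_Iio]
  have h1 : d - 1 + 1 = d := Nat.sub_add_cancel hd1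
  have h2 : ((d - 1 : ℕ) : ℝ) + 1 = (d : ℝ) := by
    rw [Nat.cast_sub hd1]; ring
  rw [h1, h2]

lemma my_measure_eq (μ : Measure E) [μ.IsAddHaarMeasure] (G H : E → ℝ)
    (hGc : Continuous fun ω : sphere (0:E) 1 => G ω)
    (hGpos : ∀ x : E, x ≠ 0 → 0 < G x)
    (hGhom : ∀ t : ℝ, 0 < t → ∀ x : E, x ≠ 0 → G (t • x) = t * G x)
    (hHc : Continuous fun ω : sphere (0:E) 1 => H ω)
    (hHpos : ∀ x : E, x ≠ 0 → 0 < H x)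
    (hHhom : ∀ t : ℝ, 0 < t → ∀ x : E, x ≠ 0 → H (t • x) = t * H x)
    (hGH : ∀ ω : sphere (0:E) 1, (H ω)⁻¹ ^ (finrank ℝ E) =
      ((G ω)⁻¹ ^ (finrank ℝ E) + (G (-(ω:E)))⁻¹ ^ (finrank ℝ E)) / 2) :
    μ {x | G x ≤ 1} = μ {x | H x ≤ 1} := by
  rw [my_polar μ G hGc hGpos hGhom, my_polar μ H hHc hHpos hHhom]
  set d := finrank ℝ E with hd
  have hd0 : (0:ℝ) < d := Nat.cast_pos.2 Module.finrank_pos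
  set f : sphere (0:E) 1 → ℝ≥0∞ := fun ω => ENNReal.ofReal ((G ω)⁻¹ ^ d / (2 * d)) with hf
  have hfm : Measurable f :=
    ((hGc.measurable.inv.pow_const d).div_const _).ennreal_ofReal
  have h2d : ∀ x : ℝ, x / (d:ℝ) = 2 * (x / (2 * d)) := by
    intro x
    rw [mul_div_assoc', mul_div_mul_left _ _ (two_ne_zero)]
  have hL : ∀ ω : sphere (0:E) 1,
      ENNReal.ofReal ((G ω)⁻¹ ^ d / d) = 2 * f ω := by
    intro ω
    rw [h2d, ENNReal.ofReal_mul zero_le_two]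
    norm_num [hf]
  have hR : ∀ ω : sphere (0:E) 1,
      ENNReal.ofReal ((H ω)⁻¹ ^ d / d) = f ω + f (-ω) := by
    intro ω
    have hω0 : (ω:E) ≠ 0 := ne_of_mem_sphere ω.2 one_ne_zero
    have hnω0 : (-(ω:E)) ≠ 0 := neg_ne_zero.2 hω0
    have hgp : 0 ≤ (G (ω:E))⁻¹ ^ d / (2 * d) :=
      div_nonneg (pow_nonneg (inv_nonneg.2 (hGpos _ hω0).le) d) (by positivity)
    have hgn : 0 ≤ (G (-(ω:E)))⁻¹ ^ d / (2 * d) :=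
      div_nonneg (pow_nonneg (inv_nonneg.2 (hGpos _ hnω0).le) d) (by positivity)
    have h1 : (H (ω:E))⁻¹ ^ d / d
        = (G (ω:E))⁻¹ ^ d / (2 * d) + (G (-(ω:E)))⁻¹ ^ d / (2 * d) := by
      rw [hGH ω, div_div, add_div]
    rw [h1, ENNReal.ofReal_add hgp hgn]
    simp [hf]
  simp only [hL, hR]
  rw [lintegral_const_mul 2 hfm, lintegral_add_left hfm]
  have hneg : ∫⁻ ω : sphere (0:E) 1, f (-ω) ∂μ.toSphere
      = ∫⁻ ω : sphere (0:E) 1, f ω ∂μ.toSphere :=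
    (my_toSphere_neg μ).lintegral_comp hfm
  rw [hneg, two_mul]

end Helpers

lemma my_pow_eq {m : ℕ} (hm : 1 ≤ m) {a b : ℝ} (ha : 0 < a) (hb : 0 < b) :
    (((2 / ((a ^ m)⁻¹ + (b ^ m)⁻¹)) ^ ((1:ℝ)/m))⁻¹) ^ m = ((a⁻¹) ^ m + (b⁻¹) ^ m) / 2 := by
  have hm0 : (m:ℝ) ≠ 0 := Nat.cast_ne_zero.2 (by omega)
  have hs : 0 < (a ^ m)⁻¹ + (b ^ m)⁻¹ := by positivity
  have h2s : (0:ℝ) ≤ 2 / ((a ^ m)⁻¹ + (b ^ m)⁻¹) := by positivity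
  rw [inv_pow, ← Real.rpow_natCast ((2 / ((a ^ m)⁻¹ + (b ^ m)⁻¹)) ^ ((1:ℝ)/m)) m,
    ← Real.rpow_mul h2s, one_div_mul_cancel hm0, Real.rpow_one, inv_div]
  rw [inv_pow, inv_pow]

lemma my_smul_eq {m : ℕ} (hm : 1 ≤ m) {a b t : ℝ} (ha : 0 < a) (hb : 0 < b) (ht : 0 < t) :
    (2 / (((t * a) ^ m)⁻¹ + ((t * b) ^ m)⁻¹)) ^ ((1:ℝ)/m)
      = t * (2 / ((a ^ m)⁻¹ + (b ^ m)⁻¹)) ^ ((1:ℝ)/m) := by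
  have hm0 : (m:ℝ) ≠ 0 := Nat.cast_ne_zero.2 (by omega)
  have hs : 0 < (a ^ m)⁻¹ + (b ^ m)⁻¹ := by positivity
  have htm : (0:ℝ) < t ^ m := by positivity
  have h1 : ((t * a) ^ m)⁻¹ + ((t * b) ^ m)⁻¹ = (t ^ m)⁻¹ * ((a ^ m)⁻¹ + (b ^ m)⁻¹) := by
    rw [mul_pow, mul_pow, mul_inv, mul_inv, mul_add]
  rw [h1, div_mul_eq_div_div_swap, div_inv_eq_mul, mul_comm,
    Real.mul_rpow htm.le (by positivity), ← Real.rpow_natCast t m, ← Real.rpow_mul ht.le,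
    mul_one_div_cancel hm0, Real.rpow_one]

open Metric Module in
lemma my_subspace (m : ℕ) (hm : 1 ≤ m) (F : EuclideanSpace ℝ (Fin (m + 1)) → ℝ)
    (hF : Continuous F)
    (hpos : ∀ y : EuclideanSpace ℝ (Fin (m + 1)), y ≠ 0 → 0 < F y)
    (hhom : ∀ t : ℝ, 0 < t → ∀ y, F (t • y) = t * F y)
    (V : Submodule ℝ (EuclideanSpace ℝ (Fin (m + 1)))) (hV : Module.finrank ℝ V = m) :
    μH[m] {T | T ∈ V ∧ F T ≤ 1} = μH[m] {T | T ∈ V ∧ mharmonicSym m F T ≤ 1} := by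
  haveI hnt : Nontrivial (EuclideanSpace ℝ (Fin m)) := by
    apply Module.nontrivial_of_finrank_pos (R := ℝ)
    rw [finrank_euclideanSpace_fin]
    omega
  haveI hhaar : (μH[(m:ℝ)] : Measure (EuclideanSpace ℝ (Fin m))).IsAddHaarMeasure := by
    rw [show ((m:ℝ)) = ((finrank ℝ (EuclideanSpace ℝ (Fin m)) : ℕ) : ℝ) by
      rw [finrank_euclideanSpace_fin]]
    infer_instance
  set b : OrthonormalBasis (Fin m) ℝ V := (stdOrthonormalBasis ℝ V).reindex (finCongr hV) with hb
  set e : EuclideanSpace ℝ (Fin m) ≃ₗᵢ[ℝ] V := b.repr.symm with he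
  set f : EuclideanSpace ℝ (Fin m) → EuclideanSpace ℝ (Fin (m + 1)) :=
    fun x => ((e x : V) : EuclideanSpace ℝ (Fin (m + 1))) with hfdef
  have hfI : Isometry f := (V.subtypeₗᵢ.comp e.toLinearIsometry).isometry
  have hf0 : ∀ x, x ≠ 0 → f x ≠ 0 := by
    intro x hx h
    apply hx
    have : ‖f x‖ = ‖x‖ := by
      simpa using (V.subtypeₗᵢ.comp e.toLinearIsometry).norm_map x
    rw [h, norm_zero] at this
    exact norm_eq_zero.1 this.symm
  have hfsmul : ∀ (t : ℝ) (x : EuclideanSpace ℝ (Fin m)), f (t • x) = t • f x := by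
    intro t x
    simp [hfdef, LinearIsometryEquiv.map_smul]
  have hfneg : ∀ x : EuclideanSpace ℝ (Fin m), f (-x) = -(f x) := by
    intro x
    simp [hfdef]
  have himg : ∀ (P : EuclideanSpace ℝ (Fin (m + 1)) → Prop),
      {T | T ∈ V ∧ P T} = f '' {x | P (f x)} := by
    intro P
    ext T
    simp only [Set.mem_setOf_eq, Set.mem_image]
    constructor
    · rintro ⟨hTV, hPT⟩
      refine ⟨e.symm ⟨T, hTV⟩, ?_, ?_⟩
      · simp only [Set.mem_setOf_eq, hfdef, LinearIsometryEquiv.apply_symm_apply]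
        exact hPT
      · simp [hfdef, LinearIsometryEquiv.apply_symm_apply]
    · rintro ⟨x, hx, rfl⟩
      exact ⟨(e x).2, hx⟩
  rw [himg (fun T => F T ≤ 1), himg (fun T => mharmonicSym m F T ≤ 1),
    hfI.hausdorffMeasure_image (Or.inl (by positivity)),
    hfI.hausdorffMeasure_image (Or.inl (by positivity))]
  have hGc : Continuous fun ω : Metric.sphere (0 : EuclideanSpace ℝ (Fin m)) 1 => F (f ω) :=
    (hF.comp hfI.continuous).comp continuous_subtype_val
  have hGc' : Continuous fun ω : Metric.sphere (0 : EuclideanSpace ℝ (Fin m)) 1 => F (-(f ω)) :=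
    (hF.comp (hfI.continuous.neg)).comp continuous_subtype_val
  have hωne : ∀ ω : Metric.sphere (0 : EuclideanSpace ℝ (Fin m)) 1, (ω : EuclideanSpace ℝ (Fin m)) ≠ 0 :=
    fun ω => ne_of_mem_sphere ω.2 one_ne_zero
  apply my_measure_eq (μH[(m:ℝ)]) (fun x => F (f x)) (fun x => mharmonicSym m F (f x))
  · exact hGc
  · exact fun x hx => hpos _ (hf0 x hx)
  · intro t ht x hx
    rw [hfsmul, hhom t ht]
  · -- continuity of symmetrization on the sphere
    simp only [mharmonicSym]
    have hne1 : ∀ ω : Metric.sphere (0 : EuclideanSpace ℝ (Fin m)) 1, (F (f ω)) ^ m ≠ 0 :=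
      fun ω => (pow_pos (hpos _ (hf0 _ (hωne ω))) m).ne'
    have hne2 : ∀ ω : Metric.sphere (0 : EuclideanSpace ℝ (Fin m)) 1, (F (-(f ω))) ^ m ≠ 0 :=
      fun ω => (pow_pos (hpos _ (neg_ne_zero.2 (hf0 _ (hωne ω)))) m).ne'
    have hden : Continuous fun ω : Metric.sphere (0 : EuclideanSpace ℝ (Fin m)) 1 =>
        ((F (f ω)) ^ m)⁻¹ + ((F (-(f ω))) ^ m)⁻¹ :=
      ((hGc.pow m).inv₀ hne1).add ((hGc'.pow m).inv₀ hne2)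
    have hdenne : ∀ ω : Metric.sphere (0 : EuclideanSpace ℝ (Fin m)) 1,
        ((F (f ω)) ^ m)⁻¹ + ((F (-(f ω))) ^ m)⁻¹ ≠ 0 := by
      intro ω
      have h1 : 0 < ((F (f ω)) ^ m)⁻¹ := inv_pos.2 (pow_pos (hpos _ (hf0 _ (hωne ω))) m)
      have h2 : 0 < ((F (-(f ω))) ^ m)⁻¹ :=
        inv_pos.2 (pow_pos (hpos _ (neg_ne_zero.2 (hf0 _ (hωne ω)))) m)
      positivity
    exact (continuous_const.div hden hdenne).rpow_const (fun ω => Or.inr (by positivity))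
  · -- positivity of symmetrization
    intro x hx
    have h1 : 0 < F (f x) := hpos _ (hf0 x hx)
    have h2 : 0 < F (-(f x)) := hpos _ (neg_ne_zero.2 (hf0 x hx))
    have : (0:ℝ) < 2 / ((F (f x) ^ m)⁻¹ + (F (-(f x)) ^ m)⁻¹) := by positivity
    exact Real.rpow_pos_of_pos this _
  · -- homogeneity of symmetrization
    intro t ht x hx
    have h1 : 0 < F (f x) := hpos _ (hf0 x hx)
    have h2 : 0 < F (-(f x)) := hpos _ (neg_ne_zero.2 (hf0 x hx))
    simp only [mharmonicSym, hfsmul]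
    rw [show -(t • f x) = t • (-(f x)) from (smul_neg t (f x)).symm,
      hhom t ht (f x), hhom t ht (-(f x))]
    exact my_smul_eq hm h1 h2 ht
  · -- the harmonic mean identity on the sphere
    intro ω
    have h1 : 0 < F (f ω) := hpos _ (hf0 _ (hωne ω))
    have h2 : 0 < F (-(f ω)) := hpos _ (neg_ne_zero.2 (hf0 _ (hωne ω)))
    rw [finrank_euclideanSpace_fin]
    simp only [mharmonicSym]
    rw [hfneg]
    exact my_pow_eq hm h1 h2

/-- `F` and its `m`-harmonic symmetrization give the same Hausdorff measure of the unit ball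
in every `m`-dimensional subspace; equivalently the Cartan area integrands `A^F` and
`A^(F_sym)` coincide. -/
theorem cartanAF_eq_cartanAF_sym (m : ℕ) (hm : 1 ≤ m)
    (F : EuclideanSpace ℝ (Fin (m + 1)) → ℝ)
    (hF : Continuous F)
    (hpos : ∀ y : EuclideanSpace ℝ (Fin (m + 1)), y ≠ 0 → 0 < F y)
    (hhom : ∀ t : ℝ, 0 < t → ∀ y, F (t • y) = t * F y) :
    (∀ V : Submodule ℝ (EuclideanSpace ℝ (Fin (m + 1))), Module.finrank ℝ V = m →
      μH[m] {T | T ∈ V ∧ F T ≤ 1} = μH[m] {T | T ∈ V ∧ mharmonicSym m F T ≤ 1}) ∧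
    (∀ Z : EuclideanSpace ℝ (Fin (m + 1)), Z ≠ 0 →
      cartanAF m F Z = cartanAF m (mharmonicSym m F) Z) := by
  refine ⟨fun V hV => my_subspace m hm F hF hpos hhom V hV, fun Z hZ => ?_⟩
  have h1 : Module.finrank ℝ (ℝ ∙ Z) = 1 := finrank_span_singleton hZ
  have h2 : Module.finrank ℝ (ℝ ∙ Z) + Module.finrank ℝ ((ℝ ∙ Z)ᗮ)
      = Module.finrank ℝ (EuclideanSpace ℝ (Fin (m + 1))) :=
    Submodule.finrank_add_finrank_orthogonal _
  have h3 : Module.finrank ℝ (EuclideanSpace ℝ (Fin (m + 1))) = m + 1 :=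
    finrank_euclideanSpace_fin
  have hV : Module.finrank ℝ ((ℝ ∙ Z)ᗮ) = m := by omega
  unfold cartanAF
  rw [if_neg hZ, if_neg hZ, my_subspace m hm F hF hpos hhom _ hV]
end

section
/- Let k ∈ ℕ and let f ∈ C^k(ℝ^(m+1) \ {0}) satisfy f ≥ f₀ on the unit sphere S^m for some 0 < f₀ ≤ 1, and let p ≥ 1. Then there is a constant C = C(m,k,p) such that for every multi-index α with |α| ≤ k and every ξ ∈ S^m, |D^α(f^(-p))(ξ)| ≤ C · f₀^(-(k+p)) · ρ̂_k(f)^k, where ρ̂_k(f) := max{1, max{|D^β f(ζ)| : ζ ∈ S^m, |β| ≤ k}}. -/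
/-! Write `f ^ (-p) = g ∘ f` with `g t = t ^ (-p)`. Faà di Bruno's estimate
(`norm_iteratedFDerivWithin_comp_le`) bounds `‖Dⁱ(g ∘ f)‖` by `i! · sup_{j ≤ i} ‖Dʲg(f ξ)‖ · Mⁱ`
as soon as `‖Dʲ f‖ ≤ Mʲ` for `1 ≤ j ≤ i`. Since `Dʲg(t) = (-p)(-p-1)⋯(-p-j+1) t^(-p-j)`, the sup
is at most `(p+k)ᵏ f₀^(-(k+p))` when `t ≥ f₀`, and `M = ρ̂_k(f)` works because `ρ̂_k(f) ≥ 1`. -/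

open Set Finset Nat

lemma norm_iteratedFDerivWithin_rpow_const_Ioi (q : ℝ) (n : ℕ) {x : ℝ} (hx : 0 < x) :
    ‖iteratedFDerivWithin ℝ n (fun t : ℝ => t ^ q) (Ioi 0) x‖ =
      |∏ j ∈ range n, (q - j)| * x ^ (q - n) := by
  rw [norm_iteratedFDerivWithin_eq_norm_iteratedDerivWithin,
    iteratedDerivWithin_of_isOpen_eq_iterate isOpen_Ioi hx, Real.iter_deriv_rpow_const,
    descPochhammer_eval_eq_prod_range, norm_mul, Real.norm_eq_abs,
    Real.norm_of_nonneg (Real.rpow_nonneg hx.le _)]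

lemma abs_prod_range_neg_sub_le {p : ℝ} (hp : 0 ≤ p) (n : ℕ) :
    |∏ j ∈ range n, (-p - j)| ≤ (p + n) ^ n := by
  rw [Finset.abs_prod, ← Finset.card_range n, ← Finset.prod_const, Finset.card_range]
  refine Finset.prod_le_prod (fun _ _ => abs_nonneg _) fun j hj => ?_
  have hjn : (j : ℝ) ≤ n := by exact_mod_cast (Finset.mem_range.mp hj).le
  have hj0 : (0 : ℝ) ≤ j := j.cast_nonneg
  rw [abs_of_nonpos (by linarith : -p - (j : ℝ) ≤ 0)]
  linarith

lemma norm_iteratedFDerivWithin_rpow_neg_le {p f₀ x : ℝ} {n k : ℕ} (hp : 0 ≤ p)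
    (hf₀ : 0 < f₀) (hf₀1 : f₀ ≤ 1) (hx : f₀ ≤ x) (hn : n ≤ k) :
    ‖iteratedFDerivWithin ℝ n (fun t : ℝ => t ^ (-p)) (Ioi 0) x‖ ≤
      (p + k) ^ k * f₀ ^ (-((k : ℝ) + p)) := by
  have hnk : (n : ℝ) ≤ k := by exact_mod_cast hn
  rw [norm_iteratedFDerivWithin_rpow_const_Ioi _ _ (hf₀.trans_le hx)]
  have hcoeff : |∏ j ∈ range n, (-p - j)| ≤ (p + k) ^ k := by
    refine (abs_prod_range_neg_sub_le hp n).trans ?_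
    calc (p + n) ^ n ≤ (p + k) ^ n := by gcongr
      _ ≤ (p + k) ^ k := by
        rcases k.eq_zero_or_pos with rfl | hk
        · rw [Nat.le_zero.mp hn]
        · have hk1 : (1 : ℝ) ≤ k := by exact_mod_cast hk
          exact pow_le_pow_right₀ (by linarith) hn
  have hpow : x ^ (-p - n) ≤ f₀ ^ (-((k : ℝ) + p)) :=
    calc x ^ (-p - n) ≤ f₀ ^ (-p - n) := Real.rpow_le_rpow_of_nonpos hf₀ hx (by linarith)
      _ ≤ f₀ ^ (-((k : ℝ) + p)) := Real.rpow_le_rpow_of_exponent_ge hf₀ hf₀1 (by linarith)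
  exact mul_le_mul hcoeff hpow (Real.rpow_nonneg (hf₀.trans_le hx).le _)
    (pow_nonneg (by positivity) k)

lemma norm_iteratedFDeriv_rpow_neg_comp_le {E : Type*} [NormedAddCommGroup E]
    [NormedSpace ℝ E] {f : E → ℝ} {U : Set E} {x : E} {p f₀ M : ℝ} {n k : ℕ}
    (hU : IsOpen U) (hf : ContDiffOn ℝ k f U) (hx : x ∈ U) (hp : 0 ≤ p) (hf₀ : 0 < f₀)
    (hf₀1 : f₀ ≤ 1) (hfx : f₀ ≤ f x) (hM : 1 ≤ M)
    (hD : ∀ j, 1 ≤ j → j ≤ k → ‖iteratedFDeriv ℝ j f x‖ ≤ M) (hn : n ≤ k) :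
    ‖iteratedFDeriv ℝ n (fun y => f y ^ (-p)) x‖ ≤
      k ! * (p + k) ^ k * f₀ ^ (-((k : ℝ) + p)) * M ^ k := by
  set V := U ∩ f ⁻¹' Ioi 0
  have hV : IsOpen V := hf.continuousOn.isOpen_inter_preimage hU isOpen_Ioi
  have hxV : x ∈ V := ⟨hx, hf₀.trans_le hfx⟩
  have hg : ContDiffOn ℝ k (fun t : ℝ => t ^ (-p)) (Ioi 0) := fun t ht =>
    (Real.contDiffAt_rpow_const_of_ne (ne_of_gt ht)).contDiffWithinAt
  have hFaaDiBruno := norm_iteratedFDerivWithin_comp_le hg (hf.mono inter_subset_left)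
    (by exact_mod_cast hn) (uniqueDiffOn_Ioi 0) hV.uniqueDiffOn (fun _ hy => hy.2) hxV
    (fun j hj => norm_iteratedFDerivWithin_rpow_neg_le hp hf₀ hf₀1 hfx (hj.trans hn))
    (D := M) fun j hj1 hj => by
      rw [iteratedFDerivWithin_of_isOpen j hV hxV]
      exact (hD j hj1 (hj.trans hn)).trans (le_self_pow₀ hM (by omega))
  rw [iteratedFDerivWithin_of_isOpen n hV hxV] at hFaaDiBruno
  calc _ ≤ n ! * ((p + k) ^ k * f₀ ^ (-((k : ℝ) + p))) * M ^ n := hFaaDiBruno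
    _ ≤ k ! * ((p + k) ^ k * f₀ ^ (-((k : ℝ) + p))) * M ^ k := by gcongr
    _ = _ := by ring

lemma norm_iteratedFDeriv_le_iSup_of_isCompact {E F : Type*} [NormedAddCommGroup E]
    [NormedSpace ℝ E] [NormedAddCommGroup F] [NormedSpace ℝ F] {f : E → F} {U K : Set E}
    {k j : ℕ} {z : E} (hU : IsOpen U) (hK : IsCompact K) (hKU : K ⊆ U)
    (hf : ContDiffOn ℝ k f U) (hj : j ≤ k) (hz : z ∈ K) :
    ‖iteratedFDeriv ℝ j f z‖ ≤ ⨆ i : Fin (k + 1), ⨆ ζ : K, ‖iteratedFDeriv ℝ i f ζ‖ := by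
  have hbdd (i : Fin (k + 1)) : BddAbove (range fun ζ : K => ‖iteratedFDeriv ℝ i f ζ‖) := by
    have hcont : ContinuousOn (fun y => ‖iteratedFDeriv ℝ i f y‖) U :=
      ((hf.continuousOn_iteratedFDerivWithin (by exact_mod_cast i.is_le) hU.uniqueDiffOn).congr
        (iteratedFDerivWithin_of_isOpen i hU).symm).norm
    exact (hK.bddAbove_image (hcont.mono hKU)).mono (by rintro _ ⟨ζ, rfl⟩; exact ⟨ζ, ζ.2, rfl⟩)
  calc ‖iteratedFDeriv ℝ j f z‖
        ≤ ⨆ ζ : K, ‖iteratedFDeriv ℝ (⟨j, by omega⟩ : Fin (k + 1)) f ζ‖ :=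
          le_ciSup (hbdd ⟨j, by omega⟩) ⟨z, hz⟩
    _ ≤ _ := le_ciSup (f := fun i : Fin (k + 1) => ⨆ ζ : K, ‖iteratedFDeriv ℝ i f ζ‖)
        (Finite.bddAbove_range _) ⟨j, by omega⟩

/-- Claim in Lemma 3.10: for `f ∈ C^k(ℝ^(m+1)∖{0})` with `f ≥ f₀ > 0` on the unit sphere
(`f₀ ≤ 1`) and `p ≥ 1`, there is a constant `C = C(m,k,p)` such that every derivative of
`f^(-p)` of order at most `k` is bounded on the sphere by `C·f₀^(-(k+p))·ρ̂_k(f)^k`, where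
`ρ̂_k(f) = max{1, ρ_k(f)}` and `ρ_k(f)` is the sup over the sphere of the derivatives of `f`
up to order `k`. -/
theorem deriv_inv_power_bound (m k : ℕ) (p : ℝ) (hp : 1 ≤ p) :
    ∃ C : ℝ, 0 < C ∧
      ∀ (f : EuclideanSpace ℝ (Fin (m + 1)) → ℝ) (f₀ : ℝ),
        ContDiffOn ℝ k f {(0 : EuclideanSpace ℝ (Fin (m + 1)))}ᶜ →
        0 < f₀ → f₀ ≤ 1 →
        (∀ ξ ∈ Metric.sphere (0 : EuclideanSpace ℝ (Fin (m + 1))) 1, f₀ ≤ f ξ) →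
        ∀ i ≤ k, ∀ ξ ∈ Metric.sphere (0 : EuclideanSpace ℝ (Fin (m + 1))) 1,
          ‖iteratedFDeriv ℝ i (fun y => f y ^ (-p)) ξ‖ ≤
            C * f₀ ^ (-((k : ℝ) + p)) *
              (max 1 (⨆ j : Fin (k + 1),
                ⨆ ζ : Metric.sphere (0 : EuclideanSpace ℝ (Fin (m + 1))) 1,
                  ‖iteratedFDeriv ℝ (j : ℕ) f (ζ : EuclideanSpace ℝ (Fin (m + 1)))‖)) ^ k := by
  have hp0 : 0 ≤ p := by linarith
  refine ⟨k ! * (p + k) ^ k, by positivity, ?_⟩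
  intro f f₀ hf hf₀ hf₀1 hfS i hik ξ hξ
  have hS : Metric.sphere (0 : EuclideanSpace ℝ (Fin (m + 1))) 1 ⊆ {0}ᶜ :=
    fun _ hζ => ne_zero_of_mem_sphere one_ne_zero ⟨_, hζ⟩
  exact norm_iteratedFDeriv_rpow_neg_comp_le isOpen_compl_singleton hf (hS hξ) hp0 hf₀ hf₀1
    (hfS ξ hξ) (le_max_left _ _) (fun j _ hj => (norm_iteratedFDeriv_le_iSup_of_isCompact
      isOpen_compl_singleton (isCompact_sphere 0 1) hS hf hj hξ).trans (le_max_right _ _)) hik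
end

section
/- For all natural numbers m, the following identity of polynomial sums in a real variable a holds: (Σ_{l=0}^{⌊m/2⌋} C(m+1,2l+1)·a^(2l+1))² − (Σ_{l=0}^{⌊m/2⌋} C(m,2l)·a^(2l)) · (Σ_{k=0}^{⌊m/2⌋+1} C(m+2,2k)·a^(2k)) = (Σ_{l=0}^{⌊m/2⌋} C(m,2l+1)·a^(2l+1))² − (Σ_{l=0}^{⌊m/2⌋} C(m,2l)·a^(2l))². -/
open Finset

lemma pair_sum (f : ℕ → ℝ) : ∀ N : ℕ, ∑ k ∈ Finset.range (2*N+3), f k =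
    (∑ l ∈ Finset.range (N+1), (f (2*l) + f (2*l+1))) + f (2*N+2) := by
  intro N
  induction N with
  | zero => simp [Finset.sum_range_succ]
  | succ n ih =>
    have h1 : 2*(n+1)+3 = (2*n+3) + 1 + 1 := by ring
    rw [h1, Finset.sum_range_succ, Finset.sum_range_succ, ih]
    rw [show (∑ l ∈ Finset.range (n+1+1), (f (2*l) + f (2*l+1)))
        = (∑ l ∈ Finset.range (n+1), (f (2*l) + f (2*l+1))) + (f (2*(n+1)) + f (2*(n+1)+1)) from
      Finset.sum_range_succ _ _]
    rw [show 2*(n+1) = 2*n+2 from by ring, show 2*n+2+1 = 2*n+3 from by ring,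
        show 2*n+2+2 = 2*n+4 from by ring]
    ring

lemma expand_pow (n N : ℕ) (h : n ≤ 2*N+2) (x : ℝ) :
    (1 + x)^n = ∑ k ∈ Finset.range (2*N+3), (n.choose k : ℝ) * x^k := by
  have he : ∑ k ∈ Finset.range (2*N+3), (n.choose k : ℝ) * x^k
       = ∑ k ∈ Finset.range (n+1), (n.choose k : ℝ) * x^k := by
    symm
    apply Finset.sum_subset (Finset.range_subset_range.2 (by omega))
    intro k _ hk
    simp only [Finset.mem_range, not_lt] at hk
    rw [Nat.choose_eq_zero_of_lt (by omega)]
    simp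
  rw [he, add_comm, add_pow]
  apply Finset.sum_congr rfl
  intro k hk
  simp [mul_comm]

lemma even_sum (n N : ℕ) (h : n ≤ 2*N+1) (x : ℝ) :
    ∑ l ∈ Finset.range (N+1), (n.choose (2*l) : ℝ) * x^(2*l)
      = ((1+x)^n + (1-x)^n) / 2 := by
  have h1 := expand_pow n N (by omega) x
  have h2 := expand_pow n N (by omega) (-x)
  rw [show (1 : ℝ) - x = 1 + (-x) by ring] at *
  rw [h1, h2, pair_sum, pair_sum]
  have hz : (n.choose (2*N+2) : ℝ) = 0 := by
    rw [Nat.choose_eq_zero_of_lt (by omega)]; simp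
  simp only [hz, zero_mul, add_zero, ← Finset.sum_add_distrib]
  rw [Finset.sum_div]
  apply Finset.sum_congr rfl
  intro l _
  have e1 : (-x)^(2*l) = x^(2*l) := by rw [neg_pow, pow_mul]; simp
  have e2 : (-x)^(2*l+1) = -(x^(2*l+1)) := by
    rw [pow_succ, neg_pow, pow_mul]; simp; ring
  rw [e1, e2]; ring

lemma odd_sum (n N : ℕ) (h : n ≤ 2*N+2) (x : ℝ) :
    ∑ l ∈ Finset.range (N+1), (n.choose (2*l+1) : ℝ) * x^(2*l+1)
      = ((1+x)^n - (1-x)^n) / 2 := by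
  have h1 := expand_pow n N (by omega) x
  have h2 := expand_pow n N (by omega) (-x)
  rw [show (1 : ℝ) - x = 1 + (-x) by ring] at *
  rw [h1, h2, pair_sum, pair_sum]
  have e0 : ((n.choose (2*N+2) : ℝ) * x^(2*N+2) - (n.choose (2*N+2) : ℝ) * (-x)^(2*N+2)) = 0 := by
    have : (-x)^(2*N+2) = x^(2*N+2) := by
      rw [show 2*N+2 = 2*(N+1) by ring, neg_pow, pow_mul]; simp
    rw [this]; ring
  rw [show ((∑ l ∈ Finset.range (N+1), ((n.choose (2*l):ℝ) * x^(2*l) + (n.choose (2*l+1):ℝ) * x^(2*l+1))) + (n.choose (2*N+2):ℝ) * x^(2*N+2)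
      - ((∑ l ∈ Finset.range (N+1), ((n.choose (2*l):ℝ) * (-x)^(2*l) + (n.choose (2*l+1):ℝ) * (-x)^(2*l+1))) + (n.choose (2*N+2):ℝ) * (-x)^(2*N+2)))
      = (∑ l ∈ Finset.range (N+1), ((n.choose (2*l):ℝ) * x^(2*l) + (n.choose (2*l+1):ℝ) * x^(2*l+1))
        - ∑ l ∈ Finset.range (N+1), ((n.choose (2*l):ℝ) * (-x)^(2*l) + (n.choose (2*l+1):ℝ) * (-x)^(2*l+1)))
        + ((n.choose (2*N+2):ℝ) * x^(2*N+2) - (n.choose (2*N+2):ℝ) * (-x)^(2*N+2)) by ring, e0, add_zero]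
  rw [← Finset.sum_sub_distrib, Finset.sum_div]
  apply Finset.sum_congr rfl
  intro l _
  have e1 : (-x)^(2*l) = x^(2*l) := by rw [neg_pow, pow_mul]; simp
  have e2 : (-x)^(2*l+1) = -(x^(2*l+1)) := by
    rw [pow_succ, neg_pow, pow_mul]; simp; ring
  rw [e1, e2]; ring

/-- Binomial polynomial identity (equation (4.24) in the paper): for every `m` and real `a`,
`(Σ C(m+1,2l+1)a^(2l+1))² − (Σ C(m,2l)a^(2l))·(Σ C(m+2,2k)a^(2k))
  = (Σ C(m,2l+1)a^(2l+1))² − (Σ C(m,2l)a^(2l))²`. -/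
theorem binomial_poly_identity (m : ℕ) (a : ℝ) :
    (∑ l ∈ Finset.range (m / 2 + 1), ((m + 1).choose (2 * l + 1) : ℝ) * a ^ (2 * l + 1)) ^ 2 -
        (∑ l ∈ Finset.range (m / 2 + 1), (m.choose (2 * l) : ℝ) * a ^ (2 * l)) *
          (∑ k ∈ Finset.range (m / 2 + 2), ((m + 2).choose (2 * k) : ℝ) * a ^ (2 * k)) =
      (∑ l ∈ Finset.range (m / 2 + 1), (m.choose (2 * l + 1) : ℝ) * a ^ (2 * l + 1)) ^ 2 -
        (∑ l ∈ Finset.range (m / 2 + 1), (m.choose (2 * l) : ℝ) * a ^ (2 * l)) ^ 2 := by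
  rw [odd_sum (m+1) (m/2) (by omega), even_sum m (m/2) (by omega),
      show m/2 + 2 = (m/2 + 1) + 1 by ring, even_sum (m+2) (m/2+1) (by omega),
      odd_sum m (m/2) (by omega)]
  rw [show m + 1 = m + 1 by rfl]
  rw [pow_succ (1+a) m, pow_succ (1-a) m,
      show m + 2 = (m+1)+1 by rfl, pow_succ (1+a) (m+1), pow_succ (1-a) (m+1),
      pow_succ (1+a) m, pow_succ (1-a) m]
  ring
end
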